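/- arXiv:1905.01891 — 2 statements merged into one kernel-verified Lean document; each statement's English description precedes it below -/
import Mathlib

section
/- For 0<r<α, the r-th moment μ_r(b)=∫_1^∞ x^r f_b(x) dx converges to α/(α-r) as b→∞. -/
open MeasureTheory Filter

/-- The tapered Pareto density. -/
noncomputable def taperedParetoDensity (α b x : ℝ) : ℝ :=
  if x < 1 then 0
  else if x ≤ b then α * x ^ (-α - 1)
  else b ^ (-α) * Real.exp (b - x)

/-- The `r`-th moment of the tapered Pareto distribution. -/
noncomputable def taperedParetoMoment (α r b : ℝ) : ℝ :=
  ∫ x in Set.Ioi (1 : ℝ), x ^ r * taperedParetoDensity α b x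

/-!
Split the moment at `b`. On `(1, b]` the integrand is the Pareto one, whose integral
`α (1 - b ^ (r - α)) / (α - r)` tends to `α / (α - r)`. On `(b, ∞)`, `log (x / b) ≤ x / b - 1`
gives `x ^ r ≤ b ^ r exp (r (x / b - 1))`, so once `b > r` the exponential taper still wins and
the tail is at most `b ^ (r - α) / (1 - r / b)`, which tends to `0`.
-/

open Set Real

section TailIntegral

variable {b r x : ℝ}

theorem tendsto_rpow_sub_atTop {α : ℝ} (hrα : r < α) :
    Tendsto (fun b : ℝ ↦ b ^ (r - α)) atTop (nhds 0) := by
  simpa using tendsto_rpow_neg_atTop (sub_pos.mpr hrα)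

theorem rpow_le_rpow_mul_exp (hb : 0 < b) (hx : 0 < x) (hr : 0 ≤ r) :
    x ^ r ≤ b ^ r * exp (r * (x / b - 1)) := by
  have hxb : 0 < x / b := div_pos hx hb
  calc x ^ r = b ^ r * exp (r * log (x / b)) := by
        rw [mul_comm r, ← rpow_def_of_pos hxb, div_rpow hx.le hb.le,
          mul_div_cancel₀ _ (by positivity)]
    _ ≤ b ^ r * exp (r * (x / b - 1)) := by
        gcongr
        exact log_le_sub_one_of_pos hxb

theorem rpow_mul_exp_sub_le (hb : 0 < b) (hx : 0 < x) (hr : 0 ≤ r) :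
    x ^ r * exp (b - x) ≤ b ^ r * exp (b - r) * exp ((r / b - 1) * x) := by
  calc x ^ r * exp (b - x) ≤ b ^ r * exp (r * (x / b - 1)) * exp (b - x) := by
        gcongr
        exact rpow_le_rpow_mul_exp hb hx hr
    _ = b ^ r * exp (b - r) * exp ((r / b - 1) * x) := by
        rw [mul_assoc, mul_assoc, ← exp_add, ← exp_add]
        congr 2
        field_simp
        ring

theorem integrableOn_rpow_mul_exp_sub (hr : 0 ≤ r) (hrb : r < b) :
    IntegrableOn (fun x ↦ x ^ r * exp (b - x)) (Ioi b) := by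
  have hb : 0 < b := hr.trans_lt hrb
  have hdecay : r / b - 1 < 0 := by rw [sub_neg, div_lt_one hb]; exact hrb
  refine ((integrableOn_exp_mul_Ioi hdecay b).const_mul (b ^ r * exp (b - r))).mono' ?_ ?_
  · refine ContinuousOn.aestronglyMeasurable ?_ measurableSet_Ioi
    exact (continuousOn_id.rpow_const fun x hx ↦ Or.inl (hb.trans hx).ne').mul (by fun_prop)
  · filter_upwards [ae_restrict_mem measurableSet_Ioi] with x hx
    have hx0 : 0 < x := hb.trans hx
    rw [norm_of_nonneg (by positivity)]
    exact rpow_mul_exp_sub_le hb hx0 hr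

theorem integral_rpow_mul_exp_sub_le (hr : 0 ≤ r) (hrb : r < b) :
    ∫ x in Ioi b, x ^ r * exp (b - x) ≤ b ^ r / (1 - r / b) := by
  have hb : 0 < b := hr.trans_lt hrb
  have hdecay : r / b - 1 < 0 := by rw [sub_neg, div_lt_one hb]; exact hrb
  calc ∫ x in Ioi b, x ^ r * exp (b - x)
      ≤ ∫ x in Ioi b, b ^ r * exp (b - r) * exp ((r / b - 1) * x) := by
        refine setIntegral_mono_on (integrableOn_rpow_mul_exp_sub hr hrb)
          ((integrableOn_exp_mul_Ioi hdecay b).const_mul _) measurableSet_Ioi fun x hx ↦ ?_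
        exact rpow_mul_exp_sub_le hb (hb.trans hx) hr
    _ = b ^ r / (1 - r / b) := by
        have hexp : (r / b - 1) * b = -(b - r) := by field_simp; ring
        rw [integral_const_mul, integral_exp_mul_Ioi hdecay, hexp, exp_neg, neg_div, ← div_neg,
          neg_sub]
        field_simp

theorem tendsto_rpow_neg_mul_integral_rpow_mul_exp_sub {α : ℝ} (hr : 0 ≤ r) (hrα : r < α) :
    Tendsto (fun b ↦ b ^ (-α) * ∫ x in Ioi b, x ^ r * exp (b - x)) atTop (nhds 0) := by
  have hbound : Tendsto (fun b : ℝ ↦ b ^ (r - α) / (1 - r / b)) atTop (nhds 0) := by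
    have hratio : Tendsto (fun b : ℝ ↦ 1 - r / b) atTop (nhds 1) := by
      simpa using ((tendsto_const_nhds (x := r)).div_atTop tendsto_id).const_sub 1
    rw [← zero_div 1]
    exact (tendsto_rpow_sub_atTop hrα).div hratio one_ne_zero
  refine tendsto_of_tendsto_of_tendsto_of_le_of_le' tendsto_const_nhds hbound ?_ ?_
  · filter_upwards [eventually_gt_atTop 0] with b hb
    exact mul_nonneg (by positivity) (setIntegral_nonneg measurableSet_Ioi fun x hx ↦
      mul_nonneg (rpow_nonneg (hb.trans hx).le r) (exp_pos _).le)
  · filter_upwards [eventually_gt_atTop r] with b hrb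
    have hb : 0 < b := hr.trans_lt hrb
    calc b ^ (-α) * ∫ x in Ioi b, x ^ r * exp (b - x) ≤ b ^ (-α) * (b ^ r / (1 - r / b)) := by
          gcongr
          exact integral_rpow_mul_exp_sub_le hr hrb
      _ = b ^ (r - α) / (1 - r / b) := by
          rw [mul_div_assoc', ← rpow_add hb, neg_add_eq_sub]

end TailIntegral

section Moment

variable {α b r x : ℝ}

theorem zero_notMem_uIcc_one (hb : 1 ≤ b) : (0 : ℝ) ∉ uIcc 1 b := by
  rw [uIcc_of_le hb]
  exact fun h ↦ h.1.not_gt one_pos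

theorem integral_Ioc_one_rpow_sub_one {s : ℝ} (hs : s ≠ 0) (hb : 1 ≤ b) :
    ∫ x in Ioc 1 b, x ^ (s - 1) = (b ^ s - 1) / s := by
  rw [← intervalIntegral.integral_of_le hb, integral_rpow
    (Or.inr ⟨by rwa [Ne, sub_eq_neg_self], zero_notMem_uIcc_one hb⟩), sub_add_cancel, one_rpow]

theorem rpow_mul_taperedParetoDensity_of_mem_Ioc (hx : x ∈ Ioc 1 b) :
    x ^ r * taperedParetoDensity α b x = α * x ^ (r - α - 1) := by
  have hx0 : 0 < x := one_pos.trans hx.1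
  rw [taperedParetoDensity, if_neg hx.1.le.not_gt, if_pos hx.2, sub_sub, sub_eq_add_neg r,
    rpow_add hx0, neg_add']
  ring

theorem rpow_mul_taperedParetoDensity_of_lt (hb : 1 ≤ b) (hx : b < x) :
    x ^ r * taperedParetoDensity α b x = b ^ (-α) * (x ^ r * exp (b - x)) := by
  rw [taperedParetoDensity, if_neg (hb.trans hx.le).not_gt, if_neg hx.not_ge]
  ring

theorem taperedParetoMoment_eq (hr : 0 ≤ r) (hrα : r ≠ α) (hb : 1 ≤ b) (hrb : r < b) :
    taperedParetoMoment α r b =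
      α * ((b ^ (r - α) - 1) / (r - α)) + b ^ (-α) * ∫ x in Ioi b, x ^ r * exp (b - x) := by
  have hhead : EqOn (fun x ↦ x ^ r * taperedParetoDensity α b x)
      (fun x ↦ α * x ^ (r - α - 1)) (Ioc 1 b) := fun x hx ↦
    rpow_mul_taperedParetoDensity_of_mem_Ioc hx
  have htail : EqOn (fun x ↦ x ^ r * taperedParetoDensity α b x)
      (fun x ↦ b ^ (-α) * (x ^ r * exp (b - x))) (Ioi b) := fun x hx ↦
    rpow_mul_taperedParetoDensity_of_lt hb hx
  have hhead_int : IntegrableOn (fun x ↦ α * x ^ (r - α - 1)) (Ioc 1 b) := by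
    rw [← intervalIntegrable_iff_integrableOn_Ioc_of_le hb]
    exact (intervalIntegral.intervalIntegrable_rpow
      (Or.inr (zero_notMem_uIcc_one hb))).const_mul α
  have htail_int : IntegrableOn (fun x ↦ b ^ (-α) * (x ^ r * exp (b - x))) (Ioi b) :=
    (integrableOn_rpow_mul_exp_sub hr hrb).const_mul _
  rw [taperedParetoMoment, ← Ioc_union_Ioi_eq_Ioi hb,
    setIntegral_union (Ioc_disjoint_Ioi le_rfl) measurableSet_Ioi
      (hhead_int.congr_fun hhead.symm measurableSet_Ioc)
      (htail_int.congr_fun htail.symm measurableSet_Ioi),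
    setIntegral_congr_fun measurableSet_Ioc hhead, setIntegral_congr_fun measurableSet_Ioi htail,
    integral_const_mul, integral_const_mul,
    integral_Ioc_one_rpow_sub_one (sub_ne_zero.mpr hrα) hb]

end Moment

/-- For `0 < r < α`, `μ_r(b) → α/(α - r)` as `b → ∞`. -/
theorem taperedParetoMoment_tendsto_of_lt (α r : ℝ) (hr0 : 0 < r) (hrα : r < α) :
    Tendsto (fun b : ℝ => taperedParetoMoment α r b) atTop (nhds (α / (α - r))) := by
  have hhead : Tendsto (fun b : ℝ ↦ α * ((b ^ (r - α) - 1) / (r - α))) atTop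
      (nhds (α / (α - r))) := by
    convert (((tendsto_rpow_sub_atTop hrα).sub_const 1).div_const (r - α)).const_mul α using 2
    rw [zero_sub, neg_div, ← div_neg, neg_sub, mul_one_div]
  have hmoment := hhead.add (tendsto_rpow_neg_mul_integral_rpow_mul_exp_sub hr0.le hrα)
  rw [add_zero] at hmoment
  refine hmoment.congr' ?_
  filter_upwards [eventually_ge_atTop 1, eventually_gt_atTop r] with b hb hrb
  exact (taperedParetoMoment_eq hr0.le hrα.ne hb hrb).symm
end

section
/- If X_1,…,X_n are independent random variables with E X_i = 0 and E|X_i|^κ < ∞ for some 1<κ≤2, then E|∑_{i=1}^n X_i|^κ ≤ 2 ∑_{i=1}^n E|X_i|^κ (von Bahr–Esseen inequality). -/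
/-!
With `ψ x = sign x * |x| ^ (κ - 1)`, the derivative of `|x| ^ κ` is `κ ψ x`, and `ψ` is
`(κ - 1)`-Hölder with constant `2`. Comparing derivatives along the segment from `x` to
`x + y` gives the pointwise bound `|x + y| ^ κ ≤ |x| ^ κ + κ ψ(x) y + 2 |y| ^ κ`. Applied to
`x = X₁ + ⋯ + Xₖ` and the independent centred `y = Xₖ₊₁`, the middle term has expectation
`κ E[ψ(x)] E[y] = 0`, so adding one summand raises `E|∑ X_i| ^ κ` by at most `2 E|Xₖ₊₁| ^ κ`.
-/

open MeasureTheory ProbabilityTheory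

/-- Equal to `Real.sign x * |x| ^ α` when `α ≠ 0`; this form matches `hasDerivAt_abs_rpow`. -/
noncomputable def signedRpow (α x : ℝ) : ℝ := |x| ^ (α - 1) * x

section SignedRpow

variable {α : ℝ}

lemma signedRpow_of_nonneg (hα : α ≠ 0) {x : ℝ} (hx : 0 ≤ x) : signedRpow α x = x ^ α := by
  rcases hx.eq_or_lt with rfl | hx
  · simp [signedRpow, Real.zero_rpow hα]
  · rw [signedRpow, abs_of_pos hx, Real.rpow_sub_one hx.ne', div_mul_cancel₀ _ hx.ne']

lemma signedRpow_neg (x : ℝ) : signedRpow α (-x) = -signedRpow α x := by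
  simp [signedRpow]

lemma abs_signedRpow (hα : α ≠ 0) (x : ℝ) : |signedRpow α x| = |x| ^ α := by
  have h := signedRpow_of_nonneg hα (abs_nonneg x)
  rw [signedRpow, abs_abs] at h
  rw [signedRpow, abs_mul, abs_of_nonneg (by positivity), h]

lemma measurable_signedRpow : Measurable (signedRpow α) := by
  unfold signedRpow; fun_prop

lemma hasDerivAt_abs_rpow_signedRpow {p : ℝ} (hp : 1 < p) (x : ℝ) :
    HasDerivAt (fun x : ℝ ↦ |x| ^ p) (p * signedRpow (p - 1) x) x := by
  convert hasDerivAt_abs_rpow x hp using 1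
  rw [signedRpow, sub_sub, one_add_one_eq_two, mul_assoc]

lemma abs_rpow_sub_rpow_le (hα0 : 0 ≤ α) (hα1 : α ≤ 1) {a b : ℝ} (ha : 0 ≤ a) (hb : 0 ≤ b) :
    |a ^ α - b ^ α| ≤ |a - b| ^ α := by
  wlog hba : b ≤ a generalizing a b
  · rw [abs_sub_comm, abs_sub_comm a]
    exact this hb ha (le_of_not_ge hba)
  have hmono : b ^ α ≤ a ^ α := Real.rpow_le_rpow hb hba hα0
  have hsub : a ^ α ≤ b ^ α + (a - b) ^ α := by
    simpa using Real.rpow_add_le_add_rpow hb (sub_nonneg.2 hba) hα0 hα1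
  rw [abs_of_nonneg (sub_nonneg.2 hmono), abs_of_nonneg (sub_nonneg.2 hba)]
  linarith

lemma abs_signedRpow_sub_le (hα0 : 0 < α) (hα1 : α ≤ 1) (a b : ℝ) :
    |signedRpow α a - signedRpow α b| ≤ 2 * |a - b| ^ α := by
  wlog ha : 0 ≤ a generalizing a b
  · have := this (-a) (-b) (by linarith)
    rwa [signedRpow_neg, signedRpow_neg, neg_sub_neg, neg_sub_neg, abs_sub_comm,
      abs_sub_comm b] at this
  have hpow : 0 ≤ |a - b| ^ α := by positivity
  rcases le_total 0 b with hb | hb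
  · rw [signedRpow_of_nonneg hα0.ne' ha, signedRpow_of_nonneg hα0.ne' hb]
    linarith [abs_rpow_sub_rpow_le hα0.le hα1 ha hb]
  · have hψb : signedRpow α b = -(-b) ^ α := by
      rw [← signedRpow_of_nonneg hα0.ne' (neg_nonneg.2 hb), signedRpow_neg, neg_neg]
    have hab : |a - b| = a - b := abs_of_nonneg (by linarith)
    have ha' : a ^ α ≤ (a - b) ^ α := Real.rpow_le_rpow ha (by linarith) hα0.le
    have hb' : (-b) ^ α ≤ (a - b) ^ α := Real.rpow_le_rpow (by linarith) (by linarith) hα0.le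
    rw [signedRpow_of_nonneg hα0.ne' ha, hψb, sub_neg_eq_add, hab,
      abs_of_nonneg (add_nonneg (by positivity) (Real.rpow_nonneg (neg_nonneg.2 hb) α))]
    linarith

end SignedRpow

open Set in
lemma abs_add_rpow_le {κ : ℝ} (hκ1 : 1 < κ) (hκ2 : κ ≤ 2) (x y : ℝ) :
    |x + y| ^ κ ≤ |x| ^ κ + κ * signedRpow (κ - 1) x * y + 2 * |y| ^ κ := by
  set f : ℝ → ℝ := fun t ↦ |x + t * y| ^ κ
  set B : ℝ → ℝ := fun t ↦ |x| ^ κ + κ * signedRpow (κ - 1) x * y * t + 2 * |y| ^ κ * t ^ κ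
  have hf : ∀ t, HasDerivAt f (κ * signedRpow (κ - 1) (x + t * y) * y) t := fun t ↦ by
    have h := (hasDerivAt_abs_rpow_signedRpow hκ1 (x + t * y)).comp t
      (((hasDerivAt_id' t).mul_const y).const_add x)
    exact h.congr_deriv (by simp)
  have hB : ∀ t, HasDerivAt B
      (κ * signedRpow (κ - 1) x * y + 2 * |y| ^ κ * (κ * t ^ (κ - 1))) t := fun t ↦ by
    have h := (((hasDerivAt_id' t).const_mul (κ * signedRpow (κ - 1) x * y)).const_add
      (|x| ^ κ)).add ((Real.hasDerivAt_rpow_const (Or.inr hκ1.le)).const_mul (2 * |y| ^ κ))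
    exact h.congr_deriv (by simp)
  have hbound : ∀ t ∈ Ico (0 : ℝ) 1, κ * signedRpow (κ - 1) (x + t * y) * y ≤
      κ * signedRpow (κ - 1) x * y + 2 * |y| ^ κ * (κ * t ^ (κ - 1)) := by
    rintro t ⟨ht, -⟩
    have hHolder := abs_signedRpow_sub_le (α := κ - 1) (by linarith) (by linarith) (x + t * y) x
    have hscale : |x + t * y - x| ^ (κ - 1) * |y| = t ^ (κ - 1) * |y| ^ κ := by
      have h := signedRpow_of_nonneg (α := κ) (by linarith) (abs_nonneg y)
      rw [signedRpow, abs_abs] at h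
      rw [add_sub_cancel_left, abs_mul, abs_of_nonneg ht, Real.mul_rpow ht (abs_nonneg y),
        mul_assoc, h]
    have hdiff : (signedRpow (κ - 1) (x + t * y) - signedRpow (κ - 1) x) * y ≤
        2 * t ^ (κ - 1) * |y| ^ κ :=
      calc _ ≤ |signedRpow (κ - 1) (x + t * y) - signedRpow (κ - 1) x| * |y| := by
            rw [← abs_mul]; exact le_abs_self _
        _ ≤ 2 * |x + t * y - x| ^ (κ - 1) * |y| := by gcongr
        _ = 2 * t ^ (κ - 1) * |y| ^ κ := by rw [mul_assoc, hscale, mul_assoc]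
    nlinarith
  have h01 := image_le_of_deriv_right_le_deriv_boundary
    (fun t _ ↦ (hf t).continuousAt.continuousWithinAt) (fun t _ ↦ (hf t).hasDerivWithinAt)
    (by simp [f, B, Real.zero_rpow (by linarith : κ ≠ 0)])
    (fun t _ ↦ (hB t).continuousAt.continuousWithinAt) (fun t _ ↦ (hB t).hasDerivWithinAt)
    hbound (right_mem_Icc.2 zero_le_one)
  simpa [f, B] using h01

section Moments

variable {Ω : Type*} [MeasurableSpace Ω] {μ : Measure Ω}

lemma memLp_ofReal_iff_integrable_abs_rpow {f : Ω → ℝ} (hf : AEStronglyMeasurable f μ) {p : ℝ}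
    (hp : 0 < p) : MemLp f (ENNReal.ofReal p) μ ↔ Integrable (fun ω ↦ |f ω| ^ p) μ := by
  rw [← integrable_norm_rpow_iff hf (by simpa using hp) ENNReal.ofReal_ne_top,
    ENNReal.toReal_ofReal hp.le]
  simp only [Real.norm_eq_abs]

variable [IsFiniteMeasure μ]

lemma integral_abs_add_rpow_le_of_indepFun {κ : ℝ} (hκ1 : 1 < κ) (hκ2 : κ ≤ 2) {S Y : Ω → ℝ}
    (hSY : IndepFun S Y μ) (hS : MemLp S (ENNReal.ofReal κ) μ) (hY : MemLp Y (ENNReal.ofReal κ) μ)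
    (hY0 : ∫ ω, Y ω ∂μ = 0) :
    ∫ ω, |S ω + Y ω| ^ κ ∂μ ≤ ∫ ω, |S ω| ^ κ ∂μ + 2 * ∫ ω, |Y ω| ^ κ ∂μ := by
  have hκ0 : 0 < κ := by linarith
  set ψ : ℝ → ℝ := signedRpow (κ - 1)
  have hψS_meas : AEStronglyMeasurable (fun ω ↦ ψ (S ω)) μ :=
    (measurable_signedRpow.comp_aemeasurable hS.1.aemeasurable).aestronglyMeasurable
  have hψS : Integrable (fun ω ↦ ψ (S ω)) μ := by
    have hS' : MemLp S (ENNReal.ofReal (κ - 1)) μ :=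
      hS.mono_exponent (ENNReal.ofReal_le_ofReal (by linarith))
    refine ((memLp_ofReal_iff_integrable_abs_rpow hS.1 (by linarith)).1 hS').congr'
      hψS_meas (ae_of_all _ fun ω ↦ ?_)
    rw [Real.norm_eq_abs, Real.norm_eq_abs, abs_signedRpow (by linarith),
      abs_of_nonneg (by positivity)]
  have hψSY : IndepFun (fun ω ↦ ψ (S ω)) Y μ := hSY.comp measurable_signedRpow measurable_id
  have hYint : Integrable Y μ := hY.integrable (by simpa using hκ1.le)
  have hcross : ∫ ω, ψ (S ω) * Y ω ∂μ = 0 := by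
    have h := hψSY.integral_mul_eq_mul_integral hψS_meas hY.1
    simp only [Pi.mul_apply] at h
    rw [h, hY0, mul_zero]
  have hSκ := (memLp_ofReal_iff_integrable_abs_rpow hS.1 hκ0).1 hS
  have hYκ := (memLp_ofReal_iff_integrable_abs_rpow hY.1 hκ0).1 hY
  have hSYκ := (memLp_ofReal_iff_integrable_abs_rpow (hS.1.add hY.1) hκ0).1 (hS.add hY)
  have hprod : Integrable (fun ω ↦ κ * ψ (S ω) * Y ω) μ := by
    refine ((hψSY.integrable_mul hψS hYint).const_mul κ).congr (ae_of_all _ fun ω ↦ ?_)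
    simp only [Pi.mul_apply, mul_assoc]
  have hfirst : Integrable (fun ω ↦ |S ω| ^ κ + κ * ψ (S ω) * Y ω) μ := hSκ.add hprod
  calc ∫ ω, |S ω + Y ω| ^ κ ∂μ
      ≤ ∫ ω, (|S ω| ^ κ + κ * ψ (S ω) * Y ω + 2 * |Y ω| ^ κ) ∂μ :=
        integral_mono hSYκ (hfirst.add (hYκ.const_mul 2))
          fun ω ↦ abs_add_rpow_le hκ1 hκ2 (S ω) (Y ω)
    _ = ∫ ω, |S ω| ^ κ ∂μ + κ * ∫ ω, ψ (S ω) * Y ω ∂μ + 2 * ∫ ω, |Y ω| ^ κ ∂μ := by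
        rw [integral_add hfirst (hYκ.const_mul 2), integral_add hSκ hprod]
        simp only [mul_assoc, integral_const_mul]
    _ = ∫ ω, |S ω| ^ κ ∂μ + 2 * ∫ ω, |Y ω| ^ κ ∂μ := by rw [hcross, mul_zero, add_zero]

end Moments

/-- Von Bahr–Esseen inequality: if `X_1, …, X_n` are independent with `E X_i = 0`
and `E|X_i|^κ < ∞` for some `1 < κ ≤ 2`, then `E|∑ X_i|^κ ≤ 2 ∑ E|X_i|^κ`. -/
theorem von_bahr_esseen
    {Ω : Type*} [MeasureSpace Ω] [IsProbabilityMeasure (ℙ : Measure Ω)]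
    (n : ℕ) (X : Fin n → Ω → ℝ) (hmeas : ∀ i, Measurable (X i))
    (hindep : iIndepFun X ℙ)
    (κ : ℝ) (hκ1 : 1 < κ) (hκ2 : κ ≤ 2)
    (hint : ∀ i, Integrable (fun ω => |X i ω| ^ κ) ℙ)
    (hcen : ∀ i, (∫ ω, X i ω) = 0) :
    (∫ ω, |∑ i, X i ω| ^ κ) ≤ 2 * ∑ i, ∫ ω, |X i ω| ^ κ := by
  have hLp : ∀ i, MemLp (X i) (ENNReal.ofReal κ) ℙ := fun i ↦
    (memLp_ofReal_iff_integrable_abs_rpow (hmeas i).aestronglyMeasurable (by linarith)).2 (hint i)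
  suffices h : ∀ s : Finset (Fin n),
      ∫ ω, |∑ i ∈ s, X i ω| ^ κ ≤ 2 * ∑ i ∈ s, ∫ ω, |X i ω| ^ κ from h Finset.univ
  intro s
  induction s using Finset.induction_on with
  | empty => simp [Real.zero_rpow (by linarith : κ ≠ 0)]
  | insert a s ha ih =>
    have hstep := integral_abs_add_rpow_le_of_indepFun hκ1 hκ2
      (hindep.indepFun_finsetSum_of_notMem hmeas ha) (memLp_finsetSum' s fun i _ ↦ hLp i)
      (hLp a) (hcen a)
    simp only [Finset.sum_apply] at hstep
    simp only [Finset.sum_insert ha, add_comm (X a _)]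
    linarith
end
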